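/- arXiv:1808.10102 — 2 statements merged into one kernel-verified Lean document; each statement's English description precedes it below -/
import Mathlib

section
/- For any Borel probability measure μ on Cantor space and any ε > 0, there exists a dyadic additive premeasure ν* with ν*(ε-string) = 2 such that for every binary string σ, μ[σ] < ν*(σ) < μ[σ] + 2^{-|σ|+1}. Consequently, the normalized measure ν = ν*/2 is a dyadic probability measure satisfying μ[σ] < 2ν[σ] for all σ; in particular ν is positive (ν[σ] > 0 for every σ). -/
/-!
Going down the tree level by level, each value `ν*(σ)` is split as `x + (ν*(σ) - x)` with `x` a
dyadic rational chosen in an interval of length `2^{-|σ|}`: since `μ[σ] < ν*(σ) < μ[σ] + 2^{1-|σ|}`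
and `μ[σ] = μ[σ0] + μ[σ1]`, there is room for `μ[σi] < ν*(σi) < μ[σi] + 2^{-|σ|}` for both children,
and differences of dyadic rationals are dyadic.
-/

open MeasureTheory

/-- The basic clopen cylinder of all infinite binary sequences extending the string `σ`. -/
def cyl (σ : List Bool) : Set (ℕ → Bool) :=
  {X | ∀ i : ℕ, ∀ h : i < σ.length, X i = σ.get ⟨i, h⟩}

def IsDyadic (x : ℝ) : Prop := ∃ m n : ℕ, x = (m : ℝ) / 2 ^ n

lemma IsDyadic.sub {x y : ℝ} (hx : IsDyadic x) (hy : IsDyadic y) (h : y ≤ x) :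
    IsDyadic (x - y) := by
  obtain ⟨m₁, n₁, rfl⟩ := hx
  obtain ⟨m₂, n₂, rfl⟩ := hy
  have hle : m₂ * 2 ^ n₁ ≤ m₁ * 2 ^ n₂ := by
    rw [div_le_div_iff₀ (by positivity) (by positivity)] at h
    exact_mod_cast h
  refine ⟨m₁ * 2 ^ n₂ - m₂ * 2 ^ n₁, n₁ + n₂, ?_⟩
  push_cast [Nat.cast_sub hle]
  field_simp
  ring

lemma exists_isDyadic_btwn {p q : ℝ} (hp : 0 ≤ p) (h : p < q) :
    ∃ x : ℝ, IsDyadic x ∧ p < x ∧ x < q := by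
  obtain ⟨n, hn⟩ : ∃ n : ℕ, 1 / (q - p) < 2 ^ n := pow_unbounded_of_one_lt _ one_lt_two
  have h2n : (0 : ℝ) < 2 ^ n := by positivity
  have hgap : 1 < (q - p) * 2 ^ n := by rwa [div_lt_iff₀' (sub_pos.mpr h)] at hn
  set m : ℕ := ⌊p * 2 ^ n⌋₊ + 1
  have hm_gt : p * 2 ^ n < m := by push_cast [m]; exact Nat.lt_floor_add_one _
  have hm_le : (m : ℝ) ≤ p * 2 ^ n + 1 := by
    have := Nat.floor_le (by positivity : 0 ≤ p * 2 ^ n)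
    push_cast [m]
    linarith
  refine ⟨m / 2 ^ n, ⟨m, n, rfl⟩, (lt_div_iff₀ h2n).mpr hm_gt, (div_lt_iff₀ h2n).mpr ?_⟩
  linarith

noncomputable def dyadicBtwn (p q : ℝ) : ℝ :=
  if h : 0 ≤ p ∧ p < q then (exists_isDyadic_btwn h.1 h.2).choose else 0

lemma dyadicBtwn_spec {p q : ℝ} (hp : 0 ≤ p) (h : p < q) :
    IsDyadic (dyadicBtwn p q) ∧ p < dyadicBtwn p q ∧ dyadicBtwn p q < q := by
  rw [dyadicBtwn, dif_pos ⟨hp, h⟩]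
  exact (exists_isDyadic_btwn hp h).choose_spec

/-- The part of `v` given to the left child, when the children have masses `a` and `b` and the
admissible error is `δ`. -/
noncomputable def dyadicSplit (a b δ v : ℝ) : ℝ :=
  dyadicBtwn (max a (v - b - δ)) (min (a + δ) (v - b))

lemma dyadicSplit_spec {a b δ v : ℝ} (ha : 0 ≤ a) (hlow : a + b < v) (hup : v < a + b + 2 * δ) :
    IsDyadic (dyadicSplit a b δ v) ∧
      a < dyadicSplit a b δ v ∧ dyadicSplit a b δ v < a + δ ∧
      b < v - dyadicSplit a b δ v ∧ v - dyadicSplit a b δ v < b + δ := by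
  unfold dyadicSplit
  have hlt : max a (v - b - δ) < min (a + δ) (v - b) := by
    apply max_lt <;> apply lt_min <;> linarith
  obtain ⟨hdy, hlo, hhi⟩ := dyadicBtwn_spec (le_max_of_le_left ha) hlt
  rw [max_lt_iff] at hlo
  rw [lt_min_iff] at hhi
  exact ⟨hdy, hlo.1, hhi.1, by linarith, by linarith⟩

section Premeasure

variable (m : List Bool → ℝ)

noncomputable def dyadicApprox (σ : List Bool) : ℝ :=
  σ.reverseRec 2 fun τ b v =>
    let x := dyadicSplit (m (τ ++ [false])) (m (τ ++ [true])) (2 ^ (-(τ.length : ℤ))) v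
    if b then v - x else x

@[simp]
lemma dyadicApprox_nil : dyadicApprox m [] = 2 := by
  simp [dyadicApprox]

lemma dyadicApprox_append_false (σ : List Bool) :
    dyadicApprox m (σ ++ [false]) =
      dyadicSplit (m (σ ++ [false])) (m (σ ++ [true])) (2 ^ (-(σ.length : ℤ)))
        (dyadicApprox m σ) := by
  simp [dyadicApprox]

lemma dyadicApprox_append_true (σ : List Bool) :
    dyadicApprox m (σ ++ [true]) = dyadicApprox m σ -
      dyadicSplit (m (σ ++ [false])) (m (σ ++ [true])) (2 ^ (-(σ.length : ℤ)))
        (dyadicApprox m σ) := by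
  simp [dyadicApprox]

lemma dyadicApprox_eq_add (σ : List Bool) :
    dyadicApprox m σ = dyadicApprox m (σ ++ [false]) + dyadicApprox m (σ ++ [true]) := by
  rw [dyadicApprox_append_false, dyadicApprox_append_true]
  ring

variable {m}

theorem dyadicApprox_spec (hnonneg : ∀ σ, 0 ≤ m σ)
    (hadd : ∀ σ, m σ = m (σ ++ [false]) + m (σ ++ [true])) (hpos : 0 < m []) (hlt : m [] < 2)
    (σ : List Bool) :
    m σ < dyadicApprox m σ ∧ dyadicApprox m σ < m σ + 2 ^ (1 - (σ.length : ℤ)) ∧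
      IsDyadic (dyadicApprox m σ) := by
  induction σ using List.reverseRecOn with
  | nil => exact ⟨by simpa using hlt, by simpa using hpos, 2, 0, by norm_num⟩
  | append_singleton σ b ih =>
    obtain ⟨hlow, hup, hdy⟩ := ih
    have hδ : (2 : ℝ) ^ (1 - (σ.length : ℤ)) = 2 * 2 ^ (-(σ.length : ℤ)) := by
      rw [sub_eq_add_neg, zpow_add₀ two_ne_zero, zpow_one]
    have hlen : 1 - ((σ ++ [b]).length : ℤ) = -(σ.length : ℤ) := by
      simp only [List.length_append, List.length_singleton]
      push_cast
      ring
    rw [hadd σ] at hlow hup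
    rw [hδ] at hup
    obtain ⟨hxdy, hx₁, hx₂, hx₃, hx₄⟩ := dyadicSplit_spec (hnonneg _) hlow hup
    rw [hlen]
    cases b
    · rw [dyadicApprox_append_false]
      exact ⟨hx₁, hx₂, hxdy⟩
    · rw [dyadicApprox_append_true]
      exact ⟨hx₃, hx₄, hdy.sub hxdy (by linarith [hnonneg (σ ++ [true])])⟩

end Premeasure

lemma cyl_nil : cyl [] = Set.univ := by
  ext X
  simp [cyl]

lemma cyl_append (σ : List Bool) (b : Bool) :
    cyl (σ ++ [b]) = cyl σ ∩ {X | X σ.length = b} := by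
  ext X
  simp only [cyl, Set.mem_ofPred_eq, Set.mem_inter_iff, List.length_append,
    List.length_singleton, List.get_eq_getElem]
  constructor
  · intro h
    exact ⟨fun i hi => by simpa [List.getElem_append_left hi] using h i (by omega),
      by simpa using h σ.length (by omega)⟩
  · rintro ⟨h, hlast⟩ i hi
    rcases (Nat.lt_succ_iff.mp hi).lt_or_eq with hi | rfl
    · simpa [List.getElem_append_left hi] using h i hi
    · simpa using hlast

lemma measure_cyl_eq_add (μ : Measure (ℕ → Bool)) (σ : List Bool) :
    μ (cyl σ) = μ (cyl (σ ++ [false])) + μ (cyl (σ ++ [true])) := by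
  have hmeas : MeasurableSet {X : ℕ → Bool | X σ.length = true} :=
    measurable_pi_apply _ (measurableSet_singleton _)
  have hcompl : cyl σ ∩ {X | X σ.length = false} = cyl σ \ {X | X σ.length = true} := by
    ext X
    simp
  rw [cyl_append, cyl_append, hcompl, measure_sdiff_add_inter _ hmeas]

theorem dyadic_approximation_general (μ : Measure (ℕ → Bool)) [IsProbabilityMeasure μ] :
    ∃ νstar : List Bool → ℝ,
      νstar [] = 2 ∧
      (∀ σ : List Bool, νstar σ = νstar (σ ++ [false]) + νstar (σ ++ [true])) ∧
      (∀ σ : List Bool, ∃ m n : ℕ, νstar σ = (m : ℝ) / 2 ^ n) ∧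
      (∀ σ : List Bool,
        (μ (cyl σ)).toReal < νstar σ ∧
          νstar σ < (μ (cyl σ)).toReal + (2 : ℝ) ^ (1 - (σ.length : ℤ))) ∧
      (∀ σ : List Bool, (μ (cyl σ)).toReal < 2 * (νstar σ / 2)) ∧
      (∀ σ : List Bool, 0 < νstar σ / 2) := by
  set m : List Bool → ℝ := fun σ => (μ (cyl σ)).toReal
  have hadd (σ : List Bool) : m σ = m (σ ++ [false]) + m (σ ++ [true]) := by
    simp only [m, measure_cyl_eq_add μ σ, ENNReal.toReal_add (measure_ne_top _ _)
      (measure_ne_top _ _)]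
  have hroot : m [] = 1 := by simp [m, cyl_nil]
  have hspec := dyadicApprox_spec (m := m) (fun _ => ENNReal.toReal_nonneg) hadd
    (by rw [hroot]; norm_num) (by rw [hroot]; norm_num)
  refine ⟨dyadicApprox m, dyadicApprox_nil m, dyadicApprox_eq_add m, fun σ => (hspec σ).2.2,
    fun σ => ⟨(hspec σ).1, (hspec σ).2.1⟩, fun σ => ?_, fun σ => ?_⟩
  · linarith [(hspec σ).1]
  · linarith [(hspec σ).1, (ENNReal.toReal_nonneg : 0 ≤ m σ)]

/-- Schnorr-style rationalization: every Borel probability measure on Cantor space is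
closely approximated by a dyadic additive premeasure `ν*` with `ν*(ε) = 2`, so that
`μ[σ] < ν*(σ) < μ[σ] + 2^{-|σ|+1}`; the normalization `ν = ν*/2` is a positive dyadic
probability premeasure with `μ[σ] < 2ν[σ]`. -/
theorem dyadic_approximation (μ : Measure (ℕ → Bool)) [IsProbabilityMeasure μ]
    (ε : ℝ) (hε : 0 < ε) :
    ∃ νstar : List Bool → ℝ,
      νstar [] = 2 ∧
      (∀ σ : List Bool, νstar σ = νstar (σ ++ [false]) + νstar (σ ++ [true])) ∧
      (∀ σ : List Bool, ∃ m n : ℕ, νstar σ = (m : ℝ) / 2 ^ n) ∧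
      (∀ σ : List Bool,
        (μ (cyl σ)).toReal < νstar σ ∧
          νstar σ < (μ (cyl σ)).toReal + (2 : ℝ) ^ (1 - (σ.length : ℤ))) ∧
      (∀ σ : List Bool, (μ (cyl σ)).toReal < 2 * (νstar σ / 2)) ∧
      (∀ σ : List Bool, 0 < νstar σ / 2) :=
  dyadic_approximation_general μ
end

section
/- Let μ be a continuous, positive, Borel probability measure on Cantor space. Then there exists a family (E_τ)_{τ ∈ 2^{<ω}} of finite nonempty sets of strings satisfying: (a) all strings in E_τ have a common length depending only on |τ|; (b) strings in E_{τ⌢i} extend strings in E_τ; (c) for incomparable σ, τ of the same length, E_σ and E_τ are disjoint, and lexicographically separated; (d) for each n, the cylinders over ∪_{|τ|=n} E_τ cover Cantor space; (e) 0 < μ[E_τ] ≤ 2^{-|τ|}(2 − 2^{-|τ|}) for all strings τ. -/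
open MeasureTheory

namespace PF

set_option linter.unusedSectionVars false

/-! ### Basic string and cylinder lemmas -/

/-- the length-`n` prefix of `x` as a list -/
def pre (x : ℕ → Bool) (n : ℕ) : List Bool := List.ofFn (fun i : Fin n => x i)

@[simp] lemma pre_length (x : ℕ → Bool) (n : ℕ) : (pre x n).length = n := by
  simp [pre]

lemma mem_cyl_pre (x : ℕ → Bool) (n : ℕ) : x ∈ cyl (pre x n) := by
  intro i h
  simp [pre]

lemma eq_pre_of_mem_cyl {x : ℕ → Bool} {σ : List Bool} (h : x ∈ cyl σ) :
    σ = pre x σ.length := by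
  apply List.ext_get (by simp)
  intro i h1 h2
  have := h i h1
  simp [pre, this]

lemma cyl_mono {σ τ : List Bool} (h : σ <+: τ) : cyl τ ⊆ cyl σ := by
  obtain ⟨u, rfl⟩ := h
  intro x hx i hi
  have hi' : i < (σ ++ u).length := by simp; omega
  have := hx i hi'
  rwa [List.get_eq_getElem, List.getElem_append_left hi] at this

lemma cyl_disjoint {σ τ : List Bool} (hlen : σ.length = τ.length) (hne : σ ≠ τ) :
    Disjoint (cyl σ) (cyl τ) := by
  rw [Set.disjoint_left]
  intro x hσ hτ
  exact hne ((eq_pre_of_mem_cyl hσ).trans (by rw [hlen, ← eq_pre_of_mem_cyl hτ]))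

lemma cyl_nonempty (σ : List Bool) : (cyl σ).Nonempty := by
  refine ⟨fun i => if h : i < σ.length then σ.get ⟨i, h⟩ else false, ?_⟩
  intro i h
  simp [h]

lemma measurableSet_cyl (σ : List Bool) : MeasurableSet (cyl σ) := by
  have : cyl σ = ⋂ (i : ℕ) (h : i < σ.length), (fun X : ℕ → Bool => X i) ⁻¹' {σ.get ⟨i, h⟩} := by
    ext x; simp [cyl, Set.mem_iInter]
  rw [this]
  exact MeasurableSet.iInter fun i => MeasurableSet.iInter fun h =>
    (measurable_pi_apply i) (measurableSet_singleton _)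

lemma isClosed_cyl (σ : List Bool) : IsClosed (cyl σ) := by
  have : cyl σ = ⋂ (i : ℕ) (h : i < σ.length), (fun X : ℕ → Bool => X i) ⁻¹' {σ.get ⟨i, h⟩} := by
    ext x; simp [cyl, Set.mem_iInter]
  rw [this]
  exact isClosed_iInter fun i => isClosed_iInter fun h =>
    (IsClosed.preimage (continuous_apply i) (isClosed_singleton))

/-- all binary strings of length `n` -/
def strs : ℕ → Finset (List Bool)
  | 0 => {[]}
  | n+1 => (strs n).biUnion (fun σ => {false :: σ, true :: σ})

lemma mem_strs {n : ℕ} {τ : List Bool} : τ ∈ strs n ↔ τ.length = n := by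
  induction n generalizing τ with
  | zero => simp [strs, List.length_eq_zero_iff]
  | succ n ih =>
    simp only [strs, Finset.mem_biUnion, Finset.mem_insert, Finset.mem_singleton]
    constructor
    · rintro ⟨σ, hσ, rfl | rfl⟩ <;> simp [ih.mp hσ]
    · intro h
      cases τ with
      | nil => simp at h
      | cons b t =>
        refine ⟨t, ih.mpr (by simpa using h), ?_⟩
        cases b <;> simp

lemma strs_nonempty (n : ℕ) : (strs n).Nonempty :=
  ⟨pre (fun _ => false) n, mem_strs.mpr (by simp)⟩

lemma pre_prefix_pre (x : ℕ → Bool) {a b : ℕ} (h : a ≤ b) : pre x a <+: pre x b := by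
  refine ⟨List.ofFn (fun i : Fin (b - a) => x (a + i)), ?_⟩
  apply List.ext_get
  · simp [pre]; omega
  · intro i h1 h2
    simp only [List.get_eq_getElem]
    rcases lt_or_ge i a with hi | hi
    · rw [List.getElem_append_left (by simp; omega)]
      simp [pre]
    · rw [List.getElem_append_right (by simp; omega)]
      simp [pre]
      congr 1
      omega

/-! ### Lexicographic order lemmas -/

lemma list_lt_iff (a b : List Bool) : a < b ↔ List.Lex (· < ·) a b := Iff.rfl

lemma lex_append : ∀ {a b : List Bool}, a.length = b.length → a < b →
    ∀ (u v : List Bool), a ++ u < b ++ v := by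
  intro a
  induction a with
  | nil =>
    intro b h hab
    rw [List.length_eq_zero_iff.mp h.symm] at hab
    exact absurd hab (lt_irrefl _)
  | cons x s ih =>
    intro b h hab u v
    cases b with
    | nil => simp at h
    | cons y t =>
      rw [list_lt_iff] at hab ⊢
      cases hab with
      | cons h' =>
        exact List.Lex.cons ((list_lt_iff _ _).mp
          (ih (by simpa using h) ((list_lt_iff _ _).mpr h') u v))
      | rel h' => exact List.Lex.rel h'

lemma lex_concat_cases : ∀ {τ τ' : List Bool} {i i' : Bool}, τ.length = τ'.length →
    τ ++ [i] < τ' ++ [i'] → (τ = τ' ∧ i < i') ∨ τ < τ' := by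
  intro τ
  induction τ with
  | nil =>
    intro τ' i i' h hlt
    rw [List.length_eq_zero_iff.mp h.symm] at *
    rw [list_lt_iff] at hlt
    simp only [List.nil_append] at hlt
    cases hlt with
    | cons h' => cases h'
    | rel h' => exact Or.inl ⟨rfl, h'⟩
  | cons x s ih =>
    intro τ' i i' h hlt
    cases τ' with
    | nil => simp at h
    | cons y t =>
      rw [list_lt_iff] at hlt
      simp only [List.cons_append] at hlt
      cases hlt with
      | cons h' =>
        rcases ih (by simpa using h) ((list_lt_iff _ _).mpr h') with ⟨rfl, hii⟩ | hst
        · exact Or.inl ⟨rfl, hii⟩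
        · exact Or.inr ((list_lt_iff _ _).mpr (List.Lex.cons ((list_lt_iff _ _).mp hst)))
      | rel h' => exact Or.inr ((list_lt_iff _ _).mpr (List.Lex.rel h'))

/-! ### Measure sums of cylinder families -/

section
variable (μ : Measure (ℕ → Bool)) [IsProbabilityMeasure μ]

/-- total measure of a finite set of cylinders -/
noncomputable def msum (E : Finset (List Bool)) : ENNReal := ∑ σ ∈ E, μ (cyl σ)

lemma measure_biUnion_eq_msum {E : Finset (List Bool)} {l : ℕ}
    (hl : ∀ σ ∈ E, σ.length = l) :
    μ (⋃ σ ∈ E, cyl σ) = msum μ E := by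
  refine measure_biUnion_finset ?_ (fun σ _ => measurableSet_cyl σ)
  intro σ hσ τ hτ hne
  exact cyl_disjoint (by rw [hl σ hσ, hl τ hτ]) hne

lemma msum_ne_top (E : Finset (List Bool)) : msum μ E ≠ ⊤ := by
  refine ne_top_of_le_ne_top ?_ (Finset.sum_le_sum (fun σ _ => measure_mono (Set.subset_univ (cyl σ))))
  simp [measure_univ]

lemma nonempty_of_msum_pos {E : Finset (List Bool)} (h : 0 < msum μ E) : E.Nonempty := by
  rcases E.eq_empty_or_nonempty with rfl | hne
  · simp [msum] at h
  · exact hne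

/-- Key analytic fact: all sufficiently long cylinders have small measure. -/
lemma exists_small (hcont : ∀ x : ℕ → Bool, μ {x} = 0) {δ : ENNReal} (hδ : δ ≠ 0) :
    ∃ l, ∀ σ : List Bool, σ.length = l → μ (cyl σ) < δ := by
  by_contra hcon
  push_neg at hcon
  set K : ℕ → Set (ℕ → Bool) := fun l => ⋃ σ ∈ (strs l).filter (fun σ => δ ≤ μ (cyl σ)), cyl σ with hK
  have hKsub : ∀ l, K (l+1) ⊆ K l := by
    intro l x hx
    simp only [hK, Set.mem_iUnion, Finset.mem_filter, mem_strs] at hx ⊢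
    obtain ⟨σ, ⟨hlen, hm⟩, hxσ⟩ := hx
    refine ⟨σ.take l, ⟨by simp [hlen], le_trans hm (measure_mono (cyl_mono (List.take_prefix l σ)))⟩,
      cyl_mono (List.take_prefix l σ) hxσ⟩
  have hKne : ∀ l, (K l).Nonempty := by
    intro l
    obtain ⟨σ, hlen, hm⟩ := hcon l
    obtain ⟨x, hx⟩ := cyl_nonempty σ
    exact ⟨x, Set.mem_iUnion₂.mpr ⟨σ, Finset.mem_filter.mpr ⟨mem_strs.mpr hlen, hm⟩, hx⟩⟩
  have hKclosed : ∀ l, IsClosed (K l) := fun l =>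
    Set.Finite.isClosed_biUnion (Finset.finite_toSet _) (fun σ _ => isClosed_cyl σ)
  have hKcpt : IsCompact (K 0) := (hKclosed 0).isCompact
  obtain ⟨x, hx⟩ := IsCompact.nonempty_iInter_of_sequence_nonempty_isCompact_isClosed
    K hKsub hKne hKcpt hKclosed
  have hpre : ∀ l, δ ≤ μ (cyl (pre x l)) := by
    intro l
    have hxl := Set.mem_iInter.mp hx l
    simp only [hK, Set.mem_iUnion, Finset.mem_filter, mem_strs] at hxl
    obtain ⟨σ, ⟨hlen, hm⟩, hxσ⟩ := hxl
    have : σ = pre x l := by rw [eq_pre_of_mem_cyl hxσ, hlen]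
    rwa [this] at hm
  have hsing : {x} = ⋂ l, cyl (pre x l) := by
    ext y
    simp only [Set.mem_singleton_iff, Set.mem_iInter]
    constructor
    · rintro rfl l; exact mem_cyl_pre _ l
    · intro h
      funext i
      have h2 := h (i+1) i (by rw [pre_length]; omega)
      simp only [pre, List.get_eq_getElem, List.getElem_ofFn] at h2
      exact h2
  have hanti : Directed (fun a b : Set (ℕ → Bool) => a ⊇ b) (fun l => cyl (pre x l)) := by
    intro a b
    exact ⟨max a b, cyl_mono (pre_prefix_pre x (le_max_left a b)),
      cyl_mono (pre_prefix_pre x (le_max_right a b))⟩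
  have := Directed.measure_iInter (fun l => (measurableSet_cyl (pre x l)).nullMeasurableSet)
    hanti ⟨0, measure_ne_top μ _⟩
  rw [← hsing] at this
  have : δ ≤ μ {x} := this ▸ le_iInf hpre
  rw [hcont x] at this
  exact hδ (le_antisymm (by simpa using this) zero_le)

/-! ### Splitting a family of cylinders in half -/

noncomputable def psum (F : Finset (List Bool)) (t : List Bool) : ENNReal :=
  ∑ ρ ∈ F.filter (· ≤ t), μ (cyl ρ)

noncomputable def cutset (F : Finset (List Bool)) : Finset (List Bool) :=
  F.filter (fun t => msum μ F / 2 < psum μ F t)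

noncomputable def cut (F : Finset (List Bool)) : List Bool :=
  if h : (cutset μ F).Nonempty then (cutset μ F).min' h else []

noncomputable def low (F : Finset (List Bool)) : Finset (List Bool) :=
  F.filter (· ≤ cut μ F)

noncomputable def high (F : Finset (List Bool)) : Finset (List Bool) :=
  F.filter (fun ρ => ¬ ρ ≤ cut μ F)

lemma cutset_nonempty {F : Finset (List Bool)} (hpos : 0 < msum μ F) :
    (cutset μ F).Nonempty := by
  have hne : F.Nonempty := nonempty_of_msum_pos μ hpos
  refine ⟨F.max' hne, Finset.mem_filter.mpr ⟨F.max'_mem hne, ?_⟩⟩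
  have : F.filter (· ≤ F.max' hne) = F := by
    apply Finset.filter_true_of_mem
    intro ρ hρ; exact F.le_max' ρ hρ
  rw [psum, this]
  exact ENNReal.half_lt_self hpos.ne' (msum_ne_top μ F)

lemma cut_spec {F : Finset (List Bool)} (hpos : 0 < msum μ F) :
    cut μ F ∈ F ∧ msum μ F / 2 < psum μ F (cut μ F) := by
  have h := cutset_nonempty μ hpos
  have hmem := (cutset μ F).min'_mem h
  simp only [cutset, Finset.mem_filter] at hmem
  rw [cut, dif_pos h]
  exact hmem

lemma msum_low_eq {F : Finset (List Bool)} : msum μ (low μ F) = psum μ F (cut μ F) := rfl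

lemma msum_low_add_high {F : Finset (List Bool)} :
    msum μ (low μ F) + msum μ (high μ F) = msum μ F :=
  Finset.sum_filter_add_sum_filter_not F _ _

lemma low_union_high {F : Finset (List Bool)} : low μ F ∪ high μ F = F :=
  Finset.filter_union_filter_not_eq _ F

lemma low_subset {F : Finset (List Bool)} : low μ F ⊆ F := Finset.filter_subset _ F
lemma high_subset {F : Finset (List Bool)} : high μ F ⊆ F := Finset.filter_subset _ F

lemma low_high_sep {F : Finset (List Bool)} {a b : List Bool}
    (ha : a ∈ low μ F) (hb : b ∈ high μ F) : a < b := by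
  rw [low, Finset.mem_filter] at ha
  rw [high, Finset.mem_filter] at hb
  exact lt_of_le_of_lt ha.2 (lt_of_not_ge hb.2)

lemma msum_low_pos {F : Finset (List Bool)} (hpos : 0 < msum μ F) :
    0 < msum μ (low μ F) := by
  have h := (cut_spec μ hpos).2
  rw [← msum_low_eq] at h
  exact lt_of_le_of_lt zero_le h

lemma msum_low_le {F : Finset (List Bool)} (hpos : 0 < msum μ F) {ε : ENNReal}
    (hsmall : ∀ ρ ∈ F, μ (cyl ρ) < ε) (hε : ε ≤ msum μ F / 2) :
    msum μ (low μ F) ≤ msum μ F / 2 + ε ∧ msum μ (low μ F) < msum μ F := by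
  obtain ⟨htmem, hthalf⟩ := cut_spec μ hpos
  set t := cut μ F with ht
  have hdecomp : F.filter (· ≤ t) = insert t (F.filter (· < t)) := by
    ext ρ
    simp only [Finset.mem_filter, Finset.mem_insert]
    constructor
    · rintro ⟨hρF, hle⟩
      rcases lt_or_eq_of_le hle with h | h
      · exact Or.inr ⟨hρF, h⟩
      · exact Or.inl h
    · rintro (rfl | ⟨hρF, hlt⟩)
      · exact ⟨htmem, le_refl _⟩
      · exact ⟨hρF, le_of_lt hlt⟩
  have htnot : t ∉ F.filter (· < t) := by
    simp only [Finset.mem_filter]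
    rintro ⟨-, h⟩; exact absurd h (lt_irrefl t)
  have hsum : msum μ (low μ F) = (∑ ρ ∈ F.filter (· < t), μ (cyl ρ)) + μ (cyl t) := by
    rw [msum_low_eq, psum, hdecomp, Finset.sum_insert htnot, add_comm]
  have hbelow : (∑ ρ ∈ F.filter (· < t), μ (cyl ρ)) ≤ msum μ F / 2 := by
    rcases (F.filter (· < t)).eq_empty_or_nonempty with he | hne
    · rw [he]; simp
    · set t' := (F.filter (· < t)).max' hne with ht'
      have ht'mem := (F.filter (· < t)).max'_mem hne
      rw [Finset.mem_filter] at ht'mem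
      have ht'not : ¬ (msum μ F / 2 < psum μ F t') := by
        intro hcon
        have : t' ∈ cutset μ F := Finset.mem_filter.mpr ⟨ht'mem.1, hcon⟩
        have hmin := (cutset μ F).min'_le t' this
        rw [cut, dif_pos (cutset_nonempty μ hpos)] at ht
        rw [← ht] at hmin
        exact absurd ht'mem.2 (not_lt_of_ge hmin)
      push_neg at ht'not
      refine le_trans ?_ ht'not
      apply Finset.sum_le_sum_of_subset
      intro ρ hρ
      rw [Finset.mem_filter] at hρ ⊢
      exact ⟨hρ.1, (F.filter (· < t)).le_max' ρ (Finset.mem_filter.mpr hρ)⟩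
  constructor
  · rw [hsum]
    exact add_le_add hbelow (le_of_lt (hsmall t htmem))
  · rw [hsum]
    calc (∑ ρ ∈ F.filter (· < t), μ (cyl ρ)) + μ (cyl t)
        ≤ msum μ F / 2 + μ (cyl t) := add_le_add_left hbelow _
      _ < msum μ F / 2 + msum μ F / 2 := by
          apply ENNReal.add_lt_add_left
          · exact ne_top_of_le_ne_top (msum_ne_top μ F) ENNReal.half_le_self
          · exact lt_of_lt_of_le (hsmall t htmem) hε
      _ = msum μ F := ENNReal.add_halves _

lemma msum_high_lt_half {F : Finset (List Bool)} (hpos : 0 < msum μ F) :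
    msum μ (high μ F) < msum μ F / 2 := by
  have h1 := (cut_spec μ hpos).2
  rw [← msum_low_eq] at h1
  by_contra hcon
  push_neg at hcon
  have hfin : msum μ F / 2 ≠ ⊤ := ne_top_of_le_ne_top (msum_ne_top μ F) ENNReal.half_le_self
  have : msum μ F < msum μ F := by
    conv_lhs => rw [← ENNReal.add_halves (msum μ F)]
    calc msum μ F / 2 + msum μ F / 2
        < msum μ (low μ F) + msum μ F / 2 := by
          exact (ENNReal.add_lt_add_iff_right hfin).mpr h1
      _ ≤ msum μ (low μ F) + msum μ (high μ F) := add_le_add_right hcon _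
      _ = msum μ F := msum_low_add_high μ
  exact absurd this (lt_irrefl _)

lemma msum_high_pos {F : Finset (List Bool)} (hpos : 0 < msum μ F) {ε : ENNReal}
    (hsmall : ∀ ρ ∈ F, μ (cyl ρ) < ε) (hε : ε ≤ msum μ F / 2) :
    0 < msum μ (high μ F) := by
  have hlt := (msum_low_le μ hpos hsmall hε).2
  by_contra hcon
  push_neg at hcon
  have h0 : msum μ (high μ F) = 0 := le_antisymm hcon zero_le
  have := msum_low_add_high μ (F := F)
  rw [h0, add_zero] at this
  rw [this] at hlt
  exact absurd hlt (lt_irrefl _)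

/-! ### Extending all strings of a family to a longer common length -/

noncomputable def extend (E : Finset (List Bool)) (l : ℕ) : Finset (List Bool) :=
  (strs l).filter (fun τ => ∃ σ ∈ E, σ <+: τ)

lemma mem_extend {E : Finset (List Bool)} {l : ℕ} {τ : List Bool} :
    τ ∈ extend E l ↔ τ.length = l ∧ ∃ σ ∈ E, σ <+: τ := by
  simp [extend, mem_strs]

lemma biUnion_extend_eq {E : Finset (List Bool)} {lE l : ℕ}
    (hE : ∀ σ ∈ E, σ.length = lE) (h : lE ≤ l) :
    ⋃ τ ∈ extend E l, cyl τ = ⋃ σ ∈ E, cyl σ := by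
  apply Set.Subset.antisymm
  · refine Set.iUnion₂_subset fun τ hτ => ?_
    obtain ⟨-, σ, hσE, hpre⟩ := mem_extend.mp hτ
    exact Set.subset_iUnion₂_of_subset σ hσE (cyl_mono hpre)
  · refine Set.iUnion₂_subset fun σ hσ => ?_
    intro x hx
    refine Set.mem_iUnion₂.mpr ⟨pre x l, mem_extend.mpr ⟨pre_length x l, σ, hσ, ?_⟩, mem_cyl_pre x l⟩
    have h1 : σ = pre x σ.length := eq_pre_of_mem_cyl hx
    rw [h1, hE σ hσ]
    exact pre_prefix_pre x (by omega)

lemma msum_extend {E : Finset (List Bool)} {lE l : ℕ}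
    (hE : ∀ σ ∈ E, σ.length = lE) (h : lE ≤ l) :
    msum μ (extend E l) = msum μ E := by
  rw [← measure_biUnion_eq_msum μ (fun τ hτ => (mem_extend.mp hτ).1),
    ← measure_biUnion_eq_msum μ hE, biUnion_extend_eq hE h]

end

/-! ### The recursive construction -/

section
variable (μ : Measure (ℕ → Bool)) [IsProbabilityMeasure μ]

noncomputable def nice (hcont : ∀ x : ℕ → Bool, μ {x} = 0) (δ : ENNReal) : ℕ :=
  if h : δ ≠ 0 then (exists_small μ hcont h).choose else 0

lemma nice_spec (hcont : ∀ x : ℕ → Bool, μ {x} = 0) {δ : ENNReal} (hδ : δ ≠ 0) {σ : List Bool}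
    (h : nice μ hcont δ ≤ σ.length) : μ (cyl σ) < δ := by
  have h1 : μ (cyl σ) ≤ μ (cyl (σ.take (nice μ hcont δ))) :=
    measure_mono (cyl_mono (List.take_prefix _ σ))
  refine lt_of_le_of_lt h1 ?_
  rw [nice, dif_pos hδ] at h ⊢
  exact (exists_small μ hcont hδ).choose_spec _ (by simp [List.length_take]; omega)

/-- the target small bound for cylinders at level `n+1` -/
noncomputable def dlt (n : ℕ) (g : List Bool → Finset (List Bool)) : ENNReal :=
  ((strs n).inf fun τ => msum μ (g τ)) / 2 ⊓ (2:ENNReal)⁻¹ ^ (2*(n+1))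

variable (hcont : ∀ x : ℕ → Bool, μ {x} = 0)

/-- the family of sets at level `n`, together with the common string length -/
noncomputable def lev : ℕ → (List Bool → Finset (List Bool)) × ℕ
  | 0 => (fun _ => {([] : List Bool)}, 0)
  | n+1 =>
    (fun ρ => if ρ.getLast? = some true
        then high μ (extend ((lev n).1 ρ.dropLast)
          (max ((lev n).2 + 1) (nice μ hcont (dlt μ n (lev n).1))))
        else low μ (extend ((lev n).1 ρ.dropLast)
          (max ((lev n).2 + 1) (nice μ hcont (dlt μ n (lev n).1)))),
     max ((lev n).2 + 1) (nice μ hcont (dlt μ n (lev n).1)))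

lemma lev_succ (n : ℕ) : lev μ hcont (n+1) =
    (fun ρ => if ρ.getLast? = some true
        then high μ (extend ((lev μ hcont n).1 ρ.dropLast)
          (max ((lev μ hcont n).2 + 1) (nice μ hcont (dlt μ n (lev μ hcont n).1))))
        else low μ (extend ((lev μ hcont n).1 ρ.dropLast)
          (max ((lev μ hcont n).2 + 1) (nice μ hcont (dlt μ n (lev μ hcont n).1)))),
     max ((lev μ hcont n).2 + 1) (nice μ hcont (dlt μ n (lev μ hcont n).1))) := by
  rw [lev]

lemma cyl_nil : cyl ([] : List Bool) = Set.univ := by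
  ext x; simp [cyl]

lemma arith_step {M δ q : ENNReal} (_hq : q ≠ ⊤) (_hM : M ≠ ⊤)
    (hC : M + (2*q)*(2*q) ≤ 2*(2*q)) (hδ : δ ≤ q*q) :
    M / 2 + δ + q * q ≤ 2 * q := by
  have h1 : M / 2 + δ + q * q ≤ M / 2 + q*q + q*q := by
    gcongr
  refine le_trans h1 ?_
  have h2 : (2:ENNReal) ≠ 0 := two_ne_zero
  have h3 : (2:ENNReal) ≠ ⊤ := ENNReal.ofNat_ne_top
  rw [← ENNReal.mul_le_mul_iff_right h2 h3]
  have hmul : (2:ENNReal) * (M/2 + q*q + q*q) = M + (2*q)*(2*q) := by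
    rw [mul_add, mul_add, ENNReal.mul_div_cancel h2 h3]
    ring
  rw [hmul]
  calc M + (2*q)*(2*q) ≤ 2*(2*q) := hC
    _ = 2 * (2 * q) := rfl

/-- The full invariant, proven by induction on the level. -/
lemma lev_inv (n : ℕ) :
    (∀ τ ∈ strs n, ∀ σ ∈ (lev μ hcont n).1 τ, σ.length = (lev μ hcont n).2) ∧
    (∀ τ ∈ strs n, 0 < msum μ ((lev μ hcont n).1 τ)) ∧
    (∀ τ ∈ strs n, msum μ ((lev μ hcont n).1 τ) + (2:ENNReal)⁻¹ ^ n * (2:ENNReal)⁻¹ ^ n ≤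
      2 * (2:ENNReal)⁻¹ ^ n) ∧
    ((strs n).biUnion (lev μ hcont n).1 = strs (lev μ hcont n).2) ∧
    (∀ τ ∈ strs n, ∀ τ' ∈ strs n, τ < τ' →
      ∀ a ∈ (lev μ hcont n).1 τ, ∀ b ∈ (lev μ hcont n).1 τ', a < b) := by
  induction n with
  | zero =>
    have hμuniv : msum μ ({([] : List Bool)} : Finset (List Bool)) = 1 := by
      simp [msum, cyl_nil]
    refine ⟨?_, ?_, ?_, ?_, ?_⟩
    · intro τ hτ σ hσ
      simp only [lev, Finset.mem_singleton] at hσ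
      simp [lev, hσ]
    · intro τ hτ
      simp only [lev, hμuniv]
      norm_num
    · intro τ hτ
      simp only [lev, hμuniv]
      norm_num
    · show Finset.biUnion {([] : List Bool)} (fun _ => {([] : List Bool)}) = {([] : List Bool)}
      simp
    · intro τ hτ τ' hτ' hlt
      rw [mem_strs, List.length_eq_zero_iff] at hτ hτ'
      subst hτ; subst hτ'
      exact absurd hlt (lt_irrefl _)
  | succ n ih =>
    obtain ⟨IA, IB, IC, ID, IE⟩ := ih
    set g : List Bool → Finset (List Bool) := (lev μ hcont n).1 with hg
    set l : ℕ := (lev μ hcont n).2 with hl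
    set δ : ENNReal := dlt μ n g with hδdef
    set l' : ℕ := max (l + 1) (nice μ hcont δ) with hl'
    have hlev := lev_succ μ hcont n
    rw [← hg, ← hl, ← hδdef, ← hl'] at hlev
    -- basic facts about δ
    have hinfpos : 0 < (strs n).inf fun τ => msum μ (g τ) :=
      (Finset.lt_inf_iff (by simp)).mpr IB
    have hqpow_ne : ((2:ENNReal)⁻¹ ^ (2*(n+1)) : ENNReal) ≠ 0 :=
      pow_ne_zero _ (ENNReal.inv_ne_zero.mpr ENNReal.ofNat_ne_top)
    have hδpos : δ ≠ 0 := by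
      rw [hδdef, dlt]
      exact (lt_inf_iff.mpr ⟨ENNReal.half_pos hinfpos.ne',
        pos_iff_ne_zero.mpr hqpow_ne⟩).ne'
    have hδq : δ ≤ (2:ENNReal)⁻¹ ^ (n+1) * (2:ENNReal)⁻¹ ^ (n+1) := by
      rw [hδdef, dlt]
      refine le_trans inf_le_right (le_of_eq ?_)
      rw [← pow_add]
      congr 1
      ring
    have hδinf : ∀ τ ∈ strs n, δ ≤ msum μ (g τ) / 2 := by
      intro τ hτ
      rw [hδdef, dlt]
      exact le_trans inf_le_left (ENNReal.div_le_div_right (Finset.inf_le hτ) 2)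
    -- facts about the extension of a single gτ
    have hll' : l ≤ l' := by omega
    have key : ∀ τ ∈ strs n,
        (∀ ρ ∈ extend (g τ) l', ρ.length = l') ∧
        msum μ (extend (g τ) l') = msum μ (g τ) ∧
        0 < msum μ (extend (g τ) l') ∧
        (∀ ρ ∈ extend (g τ) l', μ (cyl ρ) < δ) ∧
        δ ≤ msum μ (extend (g τ) l') / 2 := by
      intro τ hτ
      have h1 : ∀ ρ ∈ extend (g τ) l', ρ.length = l' := fun ρ hρ => (mem_extend.mp hρ).1
      have h2 : msum μ (extend (g τ) l') = msum μ (g τ) := msum_extend μ (IA τ hτ) hll'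
      refine ⟨h1, h2, h2 ▸ IB τ hτ, ?_, h2 ▸ hδinf τ hτ⟩
      intro ρ hρ
      exact nice_spec μ hcont hδpos (by rw [h1 ρ hρ]; exact le_max_right _ _)
    -- membership: the new sets
    have hmem' : ∀ (τ : List Bool) (b : Bool),
        (lev μ hcont (n+1)).1 (τ ++ [b]) =
          (if b = true then high μ (extend (g τ) l') else low μ (extend (g τ) l')) := by
      intro τ b
      rw [hlev]
      simp only [List.getLast?_concat, List.dropLast_concat, Option.some.injEq]
    have hsnd : (lev μ hcont (n+1)).2 = l' := by rw [hlev]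
    -- decomposition of strings of length n+1
    have hdec : ∀ ρ : List Bool, ρ ∈ strs (n+1) → ∃ τ b, ρ = τ ++ [b] ∧ τ ∈ strs n := by
      intro ρ hρ
      rw [mem_strs] at hρ
      rcases List.eq_nil_or_concat ρ with rfl | ⟨τ, b, rfl⟩
      · simp at hρ
      · exact ⟨τ, b, by rw [List.concat_eq_append], mem_strs.mpr (by simpa using hρ)⟩
    have hsub : ∀ (τ : List Bool) (b : Bool), τ ∈ strs n →
        (lev μ hcont (n+1)).1 (τ ++ [b]) ⊆ extend (g τ) l' := by
      intro τ b hτ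
      rw [hmem']
      cases b
      · rw [if_neg Bool.false_ne_true]
        exact low_subset μ
      · rw [if_pos rfl]
        exact high_subset μ
    refine ⟨?_, ?_, ?_, ?_, ?_⟩
    -- (A)
    · intro ρ hρ σ hσ
      obtain ⟨τ, b, rfl, hτ⟩ := hdec ρ hρ
      rw [hsnd]
      exact ((key τ hτ).1) σ (hsub τ b hτ hσ)
    -- (B)
    · intro ρ hρ
      obtain ⟨τ, b, rfl, hτ⟩ := hdec ρ hρ
      obtain ⟨h1, h2, h3, h4, h5⟩ := key τ hτ
      rw [hmem']
      cases b
      · rw [if_neg Bool.false_ne_true]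
        exact msum_low_pos μ h3
      · rw [if_pos rfl]
        exact msum_high_pos μ h3 h4 h5
    -- (C)
    · intro ρ hρ
      obtain ⟨τ, b, rfl, hτ⟩ := hdec ρ hρ
      obtain ⟨h1, h2, h3, h4, h5⟩ := key τ hτ
      have hMne : msum μ (g τ) ≠ ⊤ := msum_ne_top μ _
      have hq_ne : ((2:ENNReal)⁻¹ ^ (n+1) : ENNReal) ≠ ⊤ :=
        ENNReal.pow_ne_top (by simp)
      have h2q : (2:ENNReal) * (2:ENNReal)⁻¹ ^ (n+1) = (2:ENNReal)⁻¹ ^ n := by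
        rw [pow_succ, show (2:ENNReal) * ((2:ENNReal)⁻¹ ^ n * 2⁻¹) =
          (2:ENNReal)⁻¹ ^ n * (2⁻¹ * 2) by ring,
          ENNReal.inv_mul_cancel two_ne_zero ENNReal.ofNat_ne_top, mul_one]
      have hCn : msum μ (g τ) + (2 * (2:ENNReal)⁻¹ ^ (n+1)) * (2 * (2:ENNReal)⁻¹ ^ (n+1)) ≤
          2 * (2 * (2:ENNReal)⁻¹ ^ (n+1)) := by
        rw [h2q]
        exact IC τ hτ
      have harith := arith_step hq_ne hMne hCn hδq
      have hbound : msum μ ((lev μ hcont (n+1)).1 (τ ++ [b])) ≤ msum μ (g τ) / 2 + δ := by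
        rw [hmem']
        cases b
        · rw [if_neg Bool.false_ne_true]
          have := (msum_low_le μ h3 h4 h5).1
          rwa [h2] at this
        · rw [if_pos rfl]
          refine le_trans (le_of_lt (msum_high_lt_half μ h3)) ?_
          rw [h2]
          exact le_self_add
      calc msum μ ((lev μ hcont (n+1)).1 (τ ++ [b])) +
            (2:ENNReal)⁻¹ ^ (n+1) * (2:ENNReal)⁻¹ ^ (n+1)
          ≤ msum μ (g τ) / 2 + δ + (2:ENNReal)⁻¹ ^ (n+1) * (2:ENNReal)⁻¹ ^ (n+1) := by
            gcongr
        _ ≤ 2 * (2:ENNReal)⁻¹ ^ (n+1) := harith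
    -- (D)
    · rw [hsnd]
      apply Finset.ext
      intro σ
      simp only [Finset.mem_biUnion]
      constructor
      · rintro ⟨ρ, hρ, hσ⟩
        obtain ⟨τ, b, rfl, hτ⟩ := hdec ρ hρ
        exact mem_strs.mpr ((key τ hτ).1 σ (hsub τ b hτ hσ))
      · intro hσ
        rw [mem_strs] at hσ
        have htake : σ.take l ∈ strs l := mem_strs.mpr (by simp [List.length_take]; omega)
        rw [← ID, Finset.mem_biUnion] at htake
        obtain ⟨τ, hτ, hmem⟩ := htake
        have hσext : σ ∈ extend (g τ) l' :=
          mem_extend.mpr ⟨hσ, σ.take l, hmem, List.take_prefix l σ⟩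
        rw [← low_union_high μ (F := extend (g τ) l'), Finset.mem_union] at hσext
        rcases hσext with h | h
        · exact ⟨τ ++ [false], mem_strs.mpr (by rw [mem_strs] at hτ; simp [hτ]),
            by rw [hmem', if_neg Bool.false_ne_true]; exact h⟩
        · exact ⟨τ ++ [true], mem_strs.mpr (by rw [mem_strs] at hτ; simp [hτ]),
            by rw [hmem', if_pos rfl]; exact h⟩
    -- (E)
    · intro ρ hρ ρ' hρ' hlt a ha b hb
      obtain ⟨τ, i, rfl, hτ⟩ := hdec ρ hρ
      obtain ⟨τ', i', rfl, hτ'⟩ := hdec ρ' hρ'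
      have hlen : τ.length = τ'.length := by
        rw [mem_strs] at hτ hτ'; rw [hτ, hτ']
      rcases lex_concat_cases hlen hlt with ⟨rfl, hii⟩ | hττ'
      · -- same parent: i < i' forces i = false, i' = true
        have hif : i = false ∧ i' = true := by
          revert hii; cases i <;> cases i' <;> decide
        obtain ⟨rfl, rfl⟩ := hif
        rw [hmem', if_neg Bool.false_ne_true] at ha
        rw [hmem', if_pos rfl] at hb
        exact low_high_sep μ ha hb
      · -- different parents
        have haext := hsub τ i hτ ha
        have hbext := hsub τ' i' hτ' hb
        obtain ⟨-, a0, ha0, hpa⟩ := mem_extend.mp haext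
        obtain ⟨-, b0, hb0, hpb⟩ := mem_extend.mp hbext
        have h0 : a0 < b0 := IE τ hτ τ' hτ' hττ' a0 ha0 b0 hb0
        have hlen0 : a0.length = b0.length := by
          rw [IA τ hτ a0 ha0, IA τ' hτ' b0 hb0]
        obtain ⟨u, rfl⟩ := hpa
        obtain ⟨v, rfl⟩ := hpb
        exact lex_append hlen0 h0 u v

lemma lev_extends (n : ℕ) (ρ σ : List Bool)
    (hσ : σ ∈ (lev μ hcont (n+1)).1 ρ) :
    ∃ σ' ∈ (lev μ hcont n).1 ρ.dropLast, σ' <+: σ := by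
  rw [lev_succ] at hσ
  dsimp only at hσ
  by_cases h : ρ.getLast? = some true
  · rw [if_pos h] at hσ
    exact (mem_extend.mp (high_subset μ hσ)).2
  · rw [if_neg h] at hσ
    exact (mem_extend.mp (low_subset μ hσ)).2

end

end PF

/-- Combinatorial core of the construction of an order-preserving homeomorphism
transferring a continuous, positive probability measure `μ` to Lebesgue measure:
there is a family `(E_τ)` of finite nonempty sets of strings satisfying (a)–(e). -/
theorem exists_partition_family (μ : Measure (ℕ → Bool)) [IsProbabilityMeasure μ]
    (hcont : ∀ x : ℕ → Bool, μ {x} = 0)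
    (hpos : ∀ σ : List Bool, 0 < μ (cyl σ)) :
    ∃ (E : List Bool → Finset (List Bool)) (f : ℕ → ℕ),
      -- nonempty finite sets
      (∀ τ : List Bool, (E τ).Nonempty) ∧
      -- (a) all strings in `E τ` have a common length depending only on `|τ|`
      (∀ τ : List Bool, ∀ σ ∈ E τ, σ.length = f τ.length) ∧
      -- (b) strings in `E (τ⌢i)` extend strings in `E τ`
      (∀ τ : List Bool, ∀ i : Bool, ∀ σ ∈ E (τ ++ [i]), ∃ σ' ∈ E τ, σ' <+: σ) ∧
      -- (c) for incomparable `σ, τ` of the same length: disjointness and lexicographic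
      -- separation
      (∀ σ τ : List Bool, σ.length = τ.length → ¬ σ <+: τ → ¬ τ <+: σ →
        Disjoint (E σ : Set (List Bool)) (E τ : Set (List Bool)) ∧
        (List.Lex (· < ·) σ τ → ∀ a ∈ E σ, ∀ b ∈ E τ, List.Lex (· < ·) a b)) ∧
      -- (d) for each `n`, the cylinders over `∪_{|τ|=n} E_τ` cover Cantor space
      (∀ n : ℕ,
        (⋃ (τ : List Bool) (_ : τ.length = n) (σ : List Bool) (_ : σ ∈ E τ), cyl σ) =
          Set.univ) ∧
      -- (e) measure bounds
      (∀ τ : List Bool,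
        0 < μ (⋃ (σ : List Bool) (_ : σ ∈ E τ), cyl σ) ∧
        μ (⋃ (σ : List Bool) (_ : σ ∈ E τ), cyl σ) ≤
          (2 : ENNReal)⁻¹ ^ τ.length * (2 - (2 : ENNReal)⁻¹ ^ τ.length)) := by
  classical
  set E : List Bool → Finset (List Bool) := fun τ => (PF.lev μ hcont τ.length).1 τ with hE
  refine ⟨E, fun n => (PF.lev μ hcont n).2, ?_, ?_, ?_, ?_, ?_, ?_⟩
  · -- nonempty
    intro τ
    exact PF.nonempty_of_msum_pos μ
      ((PF.lev_inv μ hcont τ.length).2.1 τ (PF.mem_strs.mpr rfl))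
  · -- (a)
    intro τ σ hσ
    exact (PF.lev_inv μ hcont τ.length).1 τ (PF.mem_strs.mpr rfl) σ hσ
  · -- (b)
    intro τ i σ hσ
    have hL : (τ ++ [i]).length = τ.length + 1 := by simp
    rw [hE] at hσ
    simp only [hL] at hσ
    have := PF.lev_extends μ hcont τ.length (τ ++ [i]) σ hσ
    rwa [List.dropLast_concat] at this
  · -- (c)
    intro σ τ hlen hns hnt
    have hne : σ ≠ τ := fun h => hns (h ▸ List.prefix_refl σ)
    have hσs : σ ∈ PF.strs τ.length := PF.mem_strs.mpr hlen
    have hτs : τ ∈ PF.strs τ.length := PF.mem_strs.mpr rfl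
    have IE := (PF.lev_inv μ hcont τ.length).2.2.2.2
    have hEσ : E σ = (PF.lev μ hcont τ.length).1 σ := by rw [hE]; simp only [hlen]
    have hEτ : E τ = (PF.lev μ hcont τ.length).1 τ := rfl
    constructor
    · rw [Set.disjoint_left]
      intro a haσ haτ
      rw [Finset.mem_coe] at haσ haτ
      rw [hEσ] at haσ
      rw [hEτ] at haτ
      rcases lt_trichotomy σ τ with h | h | h
      · exact absurd (IE σ hσs τ hτs h a haσ a haτ) (lt_irrefl a)
      · exact hne h
      · exact absurd (IE τ hτs σ hσs h a haτ a haσ) (lt_irrefl a)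
    · intro hlex a ha b hb
      rw [hEσ] at ha
      rw [hEτ] at hb
      exact (PF.list_lt_iff a b).mp
        (IE σ hσs τ hτs ((PF.list_lt_iff σ τ).mpr hlex) a ha b hb)
  · -- (d)
    intro n
    ext x
    simp only [Set.mem_iUnion, Set.mem_univ, iff_true]
    have hx : PF.pre x ((PF.lev μ hcont n).2) ∈ PF.strs ((PF.lev μ hcont n).2) :=
      PF.mem_strs.mpr (PF.pre_length x _)
    rw [← (PF.lev_inv μ hcont n).2.2.2.1, Finset.mem_biUnion] at hx
    obtain ⟨τ, hτ, hmem⟩ := hx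
    have hτn : τ.length = n := PF.mem_strs.mp hτ
    refine ⟨τ, hτn, PF.pre x ((PF.lev μ hcont n).2), ?_, PF.mem_cyl_pre x _⟩
    rw [hE]
    simp only [hτn]
    exact hmem
  · -- (e)
    intro τ
    have hτs : τ ∈ PF.strs τ.length := PF.mem_strs.mpr rfl
    have hU : μ (⋃ (σ : List Bool) (_ : σ ∈ E τ), cyl σ) = PF.msum μ (E τ) :=
      PF.measure_biUnion_eq_msum μ
        (fun σ hσ => (PF.lev_inv μ hcont τ.length).1 τ hτs σ hσ)
    rw [hU]
    refine ⟨(PF.lev_inv μ hcont τ.length).2.1 τ hτs, ?_⟩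
    have hC := (PF.lev_inv μ hcont τ.length).2.2.1 τ hτs
    set q : ENNReal := (2:ENNReal)⁻¹ ^ τ.length with hq
    have hqne : q ≠ ⊤ := ENNReal.pow_ne_top (by simp)
    have hqq_ne : q * q ≠ ⊤ := ENNReal.mul_ne_top hqne hqne
    rw [ENNReal.mul_sub (fun _ _ => hqne)]
    have : q * 2 = 2 * q := mul_comm _ _
    rw [this, show q * q = q * q from rfl]
    exact (ENNReal.cancel_of_ne hqq_ne).le_tsub_of_add_le_right hC
end
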